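/- arXiv:1912.05864 — 4 statements merged into one kernel-verified Lean document; each statement's English description precedes it below -/
import Mathlib

section
/- (Berg et al.) Let κ : X × X → ℝ be a symmetric kernel and fix a base point x₀ ∈ X. Define the kernel κ̂(x,y) = κ(x,y) − κ(x,x₀) − κ(x₀,y) + κ(x₀,x₀). Then κ̂ is positive definite if and only if κ is conditionally positive definite. -/
open Finset

/-- A kernel is positive definite. -/
def IsPD {X : Type*} (K : X → X → ℝ) : Prop :=
  ∀ (n : ℕ) (x : Fin n → X) (c : Fin n → ℝ),
    0 ≤ ∑ i, ∑ j, c i * c j * K (x i) (x j)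

/-- A kernel is conditionally positive definite. -/
def IsCPD {X : Type*} (K : X → X → ℝ) : Prop :=
  ∀ (n : ℕ) (x : Fin n → X) (c : Fin n → ℝ), (∑ i, c i = 0) →
    0 ≤ ∑ i, ∑ j, c i * c j * K (x i) (x j)

lemma berg_expand {X : Type*} (κ : X → X → ℝ) (x₀ : X) (n : ℕ) (x : Fin n → X) (c : Fin n → ℝ) :
    ∑ i, ∑ j, c i * c j * (κ (x i) (x j) - κ (x i) x₀ - κ x₀ (x j) + κ x₀ x₀)
    = (∑ i, ∑ j, c i * c j * κ (x i) (x j))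
      - (∑ j, c j) * (∑ i, c i * κ (x i) x₀)
      - (∑ i, c i) * (∑ j, c j * κ x₀ (x j))
      + (∑ i, c i) * (∑ j, c j) * κ x₀ x₀ := by
  have h1 : ∑ i, ∑ j, c i * c j * κ (x i) x₀ = (∑ j, c j) * (∑ i, c i * κ (x i) x₀) := by
    rw [Finset.sum_comm, Finset.sum_mul]
    refine Finset.sum_congr rfl fun j _ => ?_
    rw [Finset.mul_sum]
    exact Finset.sum_congr rfl fun i _ => by ring
  have h2 : ∑ i, ∑ j, c i * c j * κ x₀ (x j) = (∑ i, c i) * (∑ j, c j * κ x₀ (x j)) := by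
    rw [Finset.sum_mul]
    refine Finset.sum_congr rfl fun i _ => ?_
    rw [Finset.mul_sum]
    exact Finset.sum_congr rfl fun j _ => by ring
  have h3 : ∑ i, ∑ j, c i * c j * κ x₀ x₀ = (∑ i, c i) * (∑ j, c j) * κ x₀ x₀ := by
    simp only [Finset.sum_mul, Finset.mul_sum]
    exact Finset.sum_congr rfl fun i _ => Finset.sum_congr rfl fun j _ => by ring
  simp only [mul_sub, mul_add, Finset.sum_sub_distrib, Finset.sum_add_distrib]
  rw [h1, h2, h3]

lemma berg_cons_eq {X : Type*} (κ : X → X → ℝ) (x₀ : X) (n : ℕ) (x : Fin n → X) (c : Fin n → ℝ) :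
    ∑ i, ∑ j, (Fin.cons (-∑ k, c k) c : Fin (n+1) → ℝ) i * (Fin.cons (-∑ k, c k) c : Fin (n+1) → ℝ) j
      * κ ((Fin.cons x₀ x : Fin (n+1) → X) i) ((Fin.cons x₀ x : Fin (n+1) → X) j)
    = ∑ i, ∑ j, c i * c j * (κ (x i) (x j) - κ (x i) x₀ - κ x₀ (x j) + κ x₀ x₀) := by
  rw [berg_expand]
  simp only [Fin.sum_univ_succ, Fin.cons_zero, Fin.cons_succ, Finset.sum_add_distrib,
    neg_mul, mul_neg, neg_neg, Finset.sum_neg_distrib, ← Finset.mul_sum]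
  ring_nf
  simp only [Finset.mul_sum, ← mul_assoc]
  ring

/-- (Berg et al.) The centered kernel
`κ̂(x,y) = κ(x,y) − κ(x,x₀) − κ(x₀,y) + κ(x₀,x₀)` is positive definite
iff `κ` is conditionally positive definite. -/
theorem berg_centered_pd_iff_cpd {X : Type*} (κ : X → X → ℝ) (x₀ : X)
    (hsym : ∀ x y, κ x y = κ y x) :
    IsPD (fun x y => κ x y - κ x x₀ - κ x₀ y + κ x₀ x₀) ↔ IsCPD κ := by
  constructor
  · intro hpd n x c hc
    have H := hpd n x c
    simp only at H
    rw [berg_expand κ x₀ n x c, hc] at H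
    simpa using H
  · intro hcpd n x c
    have hsum : (∑ i, (Fin.cons (-∑ k, c k) c : Fin (n+1) → ℝ) i) = 0 := by
      simp [Fin.sum_univ_succ]
    have H := hcpd (n+1) (Fin.cons x₀ x) (Fin.cons (-∑ k, c k) c) hsum
    rw [berg_cons_eq κ x₀ n x c] at H
    simpa using H
end

section
/- If κ : X × X → ℝ is a symmetric conditionally positive definite kernel, then the kernel (x,y) ↦ exp(κ(x,y)) is positive definite. -/
open Finset

section Aux

lemma qform_nonneg_of_psd {n : ℕ} {M : Matrix (Fin n) (Fin n) ℝ} (h : M.PosSemidef)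
    (c : Fin n → ℝ) : 0 ≤ ∑ i, ∑ j, c i * c j * M i j := by
  have h2 := h.dotProduct_mulVec_nonneg c
  simp only [dotProduct, Matrix.mulVec, star_trivial] at h2
  calc (0:ℝ) ≤ _ := h2
  _ = ∑ i, ∑ j, c i * c j * M i j := by
    refine Finset.sum_congr rfl fun i _ => ?_
    rw [Finset.mul_sum]
    exact Finset.sum_congr rfl fun j _ => by ring

lemma psd_of_qform {n : ℕ} {M : Matrix (Fin n) (Fin n) ℝ}
    (hs : ∀ i j, M i j = M j i)
    (h : ∀ c : Fin n → ℝ, 0 ≤ ∑ i, ∑ j, c i * c j * M i j) : M.PosSemidef := by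
  refine Matrix.PosSemidef.of_dotProduct_mulVec_nonneg ?_ ?_
  · ext i j
    simp only [Matrix.conjTranspose_apply, star_trivial]
    exact hs j i
  · intro c
    have h2 := h c
    simp only [dotProduct, Matrix.mulVec, star_trivial]
    calc (0:ℝ) ≤ _ := h2
    _ = _ := by
      refine Finset.sum_congr rfl fun i _ => ?_
      rw [Finset.mul_sum]
      exact Finset.sum_congr rfl fun j _ => by ring

lemma sum4_comm {n : ℕ} (g : Fin n → Fin n → Fin n → Fin n → ℝ) :
    ∑ i, ∑ j, ∑ k, ∑ l, g i j k l = ∑ k, ∑ l, ∑ i, ∑ j, g i j k l :=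
  calc ∑ i, ∑ j, ∑ k, ∑ l, g i j k l
      = ∑ i, ∑ k, ∑ j, ∑ l, g i j k l :=
        Finset.sum_congr rfl fun _ _ => Finset.sum_comm
    _ = ∑ k, ∑ i, ∑ j, ∑ l, g i j k l := Finset.sum_comm
    _ = ∑ k, ∑ i, ∑ l, ∑ j, g i j k l :=
        Finset.sum_congr rfl fun _ _ => Finset.sum_congr rfl fun _ _ => Finset.sum_comm
    _ = ∑ k, ∑ l, ∑ i, ∑ j, g i j k l :=
        Finset.sum_congr rfl fun _ _ => Finset.sum_comm

lemma gram_repr {n : ℕ} {M : Matrix (Fin n) (Fin n) ℝ} (h : M.PosSemidef) :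
    ∃ B : Matrix (Fin n) (Fin n) ℝ, ∀ i j, M i j = ∑ k, B k i * B k j := by
  classical
  open scoped MatrixOrder Matrix.Norms.L2Operator in
  obtain ⟨B, hB⟩ := CStarAlgebra.nonneg_iff_eq_star_mul_self.mp h.nonneg
  exact ⟨B, fun i j => by rw [hB]; simp [Matrix.mul_apply, Matrix.star_apply]⟩

lemma schur_qform {n : ℕ} {M N : Matrix (Fin n) (Fin n) ℝ}
    (hM : M.PosSemidef) (hN : N.PosSemidef) (c : Fin n → ℝ) :
    0 ≤ ∑ i, ∑ j, c i * c j * (M i j * N i j) := by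
  obtain ⟨B, hB⟩ := gram_repr hM
  obtain ⟨C, hC⟩ := gram_repr hN
  have key : ∑ i, ∑ j, c i * c j * (M i j * N i j)
      = ∑ k, ∑ l, (∑ i, c i * B k i * C l i) ^ 2 := by
    calc ∑ i, ∑ j, c i * c j * (M i j * N i j)
        = ∑ i, ∑ j, ∑ k, ∑ l, (c i * B k i * C l i) * (c j * B k j * C l j) := by
          refine Finset.sum_congr rfl fun i _ => Finset.sum_congr rfl fun j _ => ?_
          rw [hB, hC, Finset.sum_mul_sum, Finset.mul_sum]
          exact Finset.sum_congr rfl fun k _ => by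
            rw [Finset.mul_sum]; exact Finset.sum_congr rfl fun l _ => by ring
      _ = ∑ k, ∑ l, ∑ i, ∑ j, (c i * B k i * C l i) * (c j * B k j * C l j) :=
          sum4_comm _
      _ = ∑ k, ∑ l, (∑ i, c i * B k i * C l i) ^ 2 := by
          refine Finset.sum_congr rfl fun k _ => Finset.sum_congr rfl fun l _ => ?_
          rw [sq, Finset.sum_mul_sum]
  rw [key]
  exact Finset.sum_nonneg fun k _ => Finset.sum_nonneg fun l _ => sq_nonneg _

lemma psd_symm {n : ℕ} {M : Matrix (Fin n) (Fin n) ℝ} (h : M.PosSemidef) (i j : Fin n) :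
    M i j = M j i := by
  have := congrFun (congrFun h.1 i) j
  simpa [Matrix.conjTranspose_apply] using this.symm

lemma hpow_psd {n : ℕ} {M : Matrix (Fin n) (Fin n) ℝ} (h : M.PosSemidef) (m : ℕ) :
    Matrix.PosSemidef (Matrix.of fun i j => M i j ^ m) := by
  induction m with
  | zero =>
    refine psd_of_qform (fun i j => rfl) fun c => ?_
    have : ∑ i, ∑ j, c i * c j * (Matrix.of fun i j => M i j ^ 0) i j = (∑ i, c i) ^ 2 := by
      rw [sq, Finset.sum_mul_sum]
      simp
    rw [this]; exact sq_nonneg _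
  | succ m ih =>
    refine psd_of_qform (fun i j => by simp [psd_symm h i j]) fun c => ?_
    have := schur_qform ih h c
    simpa [pow_succ] using this

open Nat in
lemma exp_qform {n : ℕ} {M : Matrix (Fin n) (Fin n) ℝ} (h : M.PosSemidef) (c : Fin n → ℝ) :
    0 ≤ ∑ i, ∑ j, c i * c j * Real.exp (M i j) := by
  have hexp : ∀ t : ℝ, Real.exp t = ∑' m : ℕ, t ^ m / m ! := by
    intro t
    rw [Real.exp_eq_exp_ℝ, NormedSpace.exp_eq_tsum_div]
  have hsum : ∀ (i j : Fin n), Summable (fun m : ℕ => c i * c j * (M i j ^ m / m !)) :=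
    fun i j => (Real.summable_pow_div_factorial _).mul_left _
  have key : ∑ i, ∑ j, c i * c j * Real.exp (M i j)
      = ∑' m : ℕ, ∑ i, ∑ j, c i * c j * (M i j ^ m / m !) := by
    rw [Summable.tsum_finsetSum fun i _ => summable_sum fun j _ => hsum i j]
    refine Finset.sum_congr rfl fun i _ => ?_
    rw [Summable.tsum_finsetSum fun j _ => hsum i j]
    refine Finset.sum_congr rfl fun j _ => ?_
    rw [tsum_mul_left, ← hexp]
  rw [key]
  refine tsum_nonneg fun m => ?_
  have h1 := qform_nonneg_of_psd (hpow_psd h m) c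
  have h2 : ∑ i, ∑ j, c i * c j * (M i j ^ m / m !)
      = (∑ i, ∑ j, c i * c j * (Matrix.of fun i j => M i j ^ m) i j) / m ! := by
    rw [Finset.sum_div]
    refine Finset.sum_congr rfl fun i _ => ?_
    rw [Finset.sum_div]
    exact Finset.sum_congr rfl fun j _ => by simp [mul_div_assoc]
  rw [h2]
  positivity

lemma sum_factor_right {n : ℕ} (c g : Fin n → ℝ) :
    ∑ i, ∑ j, c i * c j * g j = (∑ i, c i) * ∑ j, c j * g j := by
  rw [Finset.sum_mul]
  refine Finset.sum_congr rfl fun i _ => ?_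
  rw [Finset.mul_sum]
  exact Finset.sum_congr rfl fun j _ => by ring

lemma sum_factor_left {n : ℕ} (c g : Fin n → ℝ) :
    ∑ i, ∑ j, c i * c j * g i = (∑ j, c j) * ∑ i, c i * g i := by
  calc ∑ i, ∑ j, c i * c j * g i = ∑ i, (c i * g i) * ∑ j, c j := by
        refine Finset.sum_congr rfl fun i _ => ?_
        rw [Finset.mul_sum]
        exact Finset.sum_congr rfl fun j _ => by ring
    _ = (∑ j, c j) * ∑ i, c i * g i := by rw [← Finset.sum_mul, mul_comm]

lemma sum_factor_const {n : ℕ} (c : Fin n → ℝ) (a : ℝ) :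
    ∑ i, ∑ j, c i * c j * a = (∑ i, c i) * (∑ j, c j) * a := by
  calc ∑ i, ∑ j, c i * c j * a = ∑ i, c i * ∑ j, c j * a := by
        refine Finset.sum_congr rfl fun i _ => ?_
        rw [Finset.mul_sum]
        exact Finset.sum_congr rfl fun j _ => by ring
    _ = (∑ i, c i) * (∑ j, c j) * a := by
        rw [← Finset.sum_mul, ← Finset.sum_mul, mul_assoc]

lemma shifted_psd {X : Type*} (κ : X → X → ℝ)
    (hsym : ∀ x y, κ x y = κ y x) (hcpd : IsCPD κ) (x₀ : X)
    {n : ℕ} (x : Fin n → X) :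
    Matrix.PosSemidef (Matrix.of fun i j =>
      κ (x i) (x j) - κ (x i) x₀ - κ (x j) x₀ + κ x₀ x₀) := by
  refine psd_of_qform (fun i j => by simp only [Matrix.of_apply]; rw [hsym (x i) (x j)]; ring)
    fun c => ?_
  set s := ∑ i, c i with hs
  set T := ∑ i, c i * κ (x i) x₀ with hT
  set y : Fin (n + 1) → X := Fin.snoc x x₀ with hy
  set d : Fin (n + 1) → ℝ := Fin.snoc c (-s) with hd
  have hd0 : ∑ i, d i = 0 := by
    rw [Fin.sum_univ_castSucc]
    simp [hd, hs]
  have hc := hcpd (n + 1) y d hd0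
  have expandR : ∑ i, ∑ j, d i * d j * κ (y i) (y j)
      = (∑ i, ∑ j, c i * c j * κ (x i) (x j)) - s * T - s * T + s * s * κ x₀ x₀ := by
    rw [Fin.sum_univ_castSucc]
    simp only [hy, hd, Fin.snoc_castSucc, Fin.snoc_last]
    rw [Fin.sum_univ_castSucc]
    simp only [Fin.snoc_castSucc, Fin.snoc_last]
    have e1 : ∀ i : Fin n, ∑ j : Fin (n+1), c i * (Fin.snoc c (-s) : Fin (n+1) → ℝ) j
          * κ (x i) ((Fin.snoc x x₀ : Fin (n+1) → X) j)
        = (∑ j, c i * c j * κ (x i) (x j)) + c i * (-s) * κ (x i) x₀ := by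
      intro i
      rw [Fin.sum_univ_castSucc]
      simp only [Fin.snoc_castSucc, Fin.snoc_last]
    rw [Finset.sum_congr rfl fun i _ => e1 i]
    rw [Finset.sum_add_distrib]
    have e2 : ∑ i, c i * (-s) * κ (x i) x₀ = -(s * T) := by
      calc ∑ i, c i * (-s) * κ (x i) x₀
          = ∑ i, -(s * (c i * κ (x i) x₀)) :=
            Finset.sum_congr rfl fun i _ => by ring
        _ = -∑ i, s * (c i * κ (x i) x₀) := Finset.sum_neg_distrib _
        _ = -(s * T) := by rw [hT, Finset.mul_sum]
    have e3 : ∑ j, -s * c j * κ x₀ (x j) = -(s * T) := by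
      calc ∑ j, -s * c j * κ x₀ (x j)
          = ∑ j, -(s * (c j * κ (x j) x₀)) :=
            Finset.sum_congr rfl fun j _ => by rw [hsym x₀ (x j)]; ring
        _ = -∑ j, s * (c j * κ (x j) x₀) := Finset.sum_neg_distrib _
        _ = -(s * T) := by rw [hT, Finset.mul_sum]
    rw [e2, e3]
    ring
  have expandL : ∑ i, ∑ j, c i * c j * (Matrix.of fun i j =>
        κ (x i) (x j) - κ (x i) x₀ - κ (x j) x₀ + κ x₀ x₀) i j
      = (∑ i, ∑ j, c i * c j * κ (x i) (x j)) - s * T - s * T + s * s * κ x₀ x₀ := by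
    have : ∀ i j : Fin n, c i * c j * (Matrix.of fun i j =>
          κ (x i) (x j) - κ (x i) x₀ - κ (x j) x₀ + κ x₀ x₀) i j
        = c i * c j * κ (x i) (x j) - c i * c j * κ (x i) x₀
          - c i * c j * κ (x j) x₀ + c i * c j * κ x₀ x₀ := by
      intro i j; simp only [Matrix.of_apply]; ring
    simp only [this]
    simp only [Finset.sum_add_distrib, Finset.sum_sub_distrib]
    rw [sum_factor_left c (fun i => κ (x i) x₀), sum_factor_right c (fun j => κ (x j) x₀),
      sum_factor_const]
  rw [expandL, ← expandR]
  exact hc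

end Aux

/-- The exponential of a symmetric c.p.d. kernel is positive definite. -/
theorem exp_of_cpd_isPD {X : Type*} (κ : X → X → ℝ)
    (hsym : ∀ x y, κ x y = κ y x) (hcpd : IsCPD κ) :
    IsPD (fun x y => Real.exp (κ x y)) := by
  intro n x c
  rcases n with _ | m
  · simp
  set x₀ : X := x 0 with hx₀
  set M : Matrix (Fin (m+1)) (Fin (m+1)) ℝ := Matrix.of fun i j =>
    κ (x i) (x j) - κ (x i) x₀ - κ (x j) x₀ + κ x₀ x₀ with hM
  have hMpsd : M.PosSemidef := shifted_psd κ hsym hcpd x₀ x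
  set b : Fin (m+1) → ℝ := fun i => c i * Real.exp (κ (x i) x₀ - κ x₀ x₀ / 2) with hb
  have key := exp_qform hMpsd b
  have eqterm : ∀ i j : Fin (m+1),
      b i * b j * Real.exp (M i j) = c i * c j * Real.exp (κ (x i) (x j)) := by
    intro i j
    have : Real.exp (κ (x i) x₀ - κ x₀ x₀ / 2) * Real.exp (κ (x j) x₀ - κ x₀ x₀ / 2)
        * Real.exp (M i j) = Real.exp (κ (x i) (x j)) := by
      rw [← Real.exp_add, ← Real.exp_add]
      congr 1
      simp only [hM, Matrix.of_apply]
      ring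
    calc b i * b j * Real.exp (M i j)
        = c i * c j * (Real.exp (κ (x i) x₀ - κ x₀ x₀ / 2)
            * Real.exp (κ (x j) x₀ - κ x₀ x₀ / 2) * Real.exp (M i j)) := by rw [hb]; ring
      _ = c i * c j * Real.exp (κ (x i) (x j)) := by rw [this]
  calc (0:ℝ) ≤ ∑ i, ∑ j, b i * b j * Real.exp (M i j) := key
    _ = ∑ i, ∑ j, c i * c j * Real.exp (κ (x i) (x j)) :=
        Finset.sum_congr rfl fun i _ => Finset.sum_congr rfl fun j _ => eqterm i j
end

section
/- If K : X × X → ℝ is a symmetric positive definite kernel, then the kernel (x,y) ↦ exp(K(x,y)) is positive definite. -/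
open Finset

/-- Schur product: product of a symmetric PD kernel with a PD kernel is PD. -/
lemma schur_aux {X : Type*} (K L : X → X → ℝ)
    (hsym : ∀ x y, K x y = K y x) (hK : IsPD K) (hL : IsPD L) :
    IsPD (fun x y => K x y * L x y) := by
  intro n x c
  set A : Matrix (Fin n) (Fin n) ℝ := Matrix.of fun i j => K (x i) (x j) with hA
  have hPSD : A.PosSemidef := by
    rw [Matrix.posSemidef_iff_dotProduct_mulVec]
    constructor
    · ext i j
      simp [A, Matrix.conjTranspose_apply, hsym (x j) (x i)]
    · intro v
      have := hK n x v
      simp only [dotProduct, Matrix.mulVec, dotProduct, star_trivial]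
      calc (0:ℝ) ≤ ∑ i, ∑ j, v i * v j * K (x i) (x j) := this
        _ = ∑ i, v i * ∑ j, A i j * v j := by
            refine Finset.sum_congr rfl fun i _ => ?_
            rw [Finset.mul_sum]
            exact Finset.sum_congr rfl fun j _ => by simp [A]; ring
  open scoped MatrixOrder in obtain ⟨B, hB⟩ := CStarAlgebra.nonneg_iff_eq_star_mul_self.mp (Matrix.nonneg_iff_posSemidef.mpr hPSD)
  have hKfac : ∀ i j, K (x i) (x j) = ∑ k, B k i * B k j := by
    intro i j
    have h := congrFun (congrFun (congrArg (fun M => (M : Matrix (Fin n) (Fin n) ℝ)) hB) i) j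
    simpa [A, Matrix.mul_apply, Matrix.conjTranspose_apply] using h
  have key : ∀ i j, c i * c j * (K (x i) (x j) * L (x i) (x j)) =
      ∑ k, (c i * B k i) * (c j * B k j) * L (x i) (x j) := by
    intro i j
    rw [hKfac i j, Finset.sum_mul, Finset.mul_sum]
    exact Finset.sum_congr rfl fun k _ => by ring
  simp only [key]
  have swap : (∑ i, ∑ j, ∑ k, (c i * B k i) * (c j * B k j) * L (x i) (x j)) =
      ∑ k, ∑ i, ∑ j, (c i * B k i) * (c j * B k j) * L (x i) (x j) := by
    calc (∑ i, ∑ j, ∑ k, (c i * B k i) * (c j * B k j) * L (x i) (x j))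
        = ∑ i, ∑ k, ∑ j, (c i * B k i) * (c j * B k j) * L (x i) (x j) :=
          Finset.sum_congr rfl fun i _ => Finset.sum_comm
      _ = ∑ k, ∑ i, ∑ j, (c i * B k i) * (c j * B k j) * L (x i) (x j) :=
          Finset.sum_comm
  rw [swap]
  refine Finset.sum_nonneg fun k _ => ?_
  exact hL n x (fun i => c i * B k i)

/-- Powers of a symmetric PD kernel are PD. -/
lemma pow_pd {X : Type*} (K : X → X → ℝ)
    (hsym : ∀ x y, K x y = K y x) (hK : IsPD K) (m : ℕ) :
    IsPD (fun x y => K x y ^ m) := by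
  induction m with
  | zero =>
      intro n x c
      simp only [pow_zero, mul_one]
      have : (∑ i, ∑ j, c i * c j) = (∑ i, c i) * (∑ j, c j) := by
        rw [Finset.sum_mul_sum]
      rw [this]
      exact mul_self_nonneg _
  | succ m ih =>
      have := schur_aux K (fun x y => K x y ^ m) hsym hK ih
      intro n x c
      have h := this n x c
      simpa [pow_succ, mul_comm] using h

/-- The exponential of a symmetric positive definite kernel is positive definite. -/
theorem exp_of_pd_isPD {X : Type*} (K : X → X → ℝ)
    (hsym : ∀ x y, K x y = K y x) (hpd : IsPD K) :
    IsPD (fun x y => Real.exp (K x y)) := by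
  intro n x c
  have hexp : ∀ a : ℝ, Real.exp a = ∑' m : ℕ, a ^ m / m.factorial := by
    intro a
    rw [Real.exp_eq_exp_ℝ, NormedSpace.exp_eq_tsum_div]
  have hsum : ∀ a : ℝ, Summable (fun m : ℕ => a ^ m / m.factorial) :=
    fun a => Real.summable_pow_div_factorial a
  have step1 : (∑ i, ∑ j, c i * c j * Real.exp (K (x i) (x j))) =
      ∑ i, ∑ j, ∑' m : ℕ, c i * c j * (K (x i) (x j) ^ m / m.factorial) := by
    refine Finset.sum_congr rfl fun i _ => Finset.sum_congr rfl fun j _ => ?_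
    rw [hexp, ← tsum_mul_left]
  have step2 : (∑ i, ∑ j, ∑' m : ℕ, c i * c j * (K (x i) (x j) ^ m / m.factorial)) =
      ∑' m : ℕ, ∑ i, ∑ j, c i * c j * (K (x i) (x j) ^ m / m.factorial) := by
    calc (∑ i, ∑ j, ∑' m : ℕ, c i * c j * (K (x i) (x j) ^ m / m.factorial))
        = ∑ i, ∑' m : ℕ, ∑ j, c i * c j * (K (x i) (x j) ^ m / m.factorial) :=
          Finset.sum_congr rfl fun i _ =>
            (Summable.tsum_finsetSum fun j _ => (hsum _).mul_left _).symm
      _ = ∑' m : ℕ, ∑ i, ∑ j, c i * c j * (K (x i) (x j) ^ m / m.factorial) :=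
          (Summable.tsum_finsetSum fun i _ => summable_sum fun j _ => (hsum _).mul_left _).symm
  rw [step1, step2]
  refine tsum_nonneg fun m => ?_
  have hpow := pow_pd K hsym hpd m n x c
  have : (∑ i, ∑ j, c i * c j * (K (x i) (x j) ^ m / m.factorial)) =
      (∑ i, ∑ j, c i * c j * K (x i) (x j) ^ m) * ((m.factorial : ℝ))⁻¹ := by
    rw [Finset.sum_mul]
    refine Finset.sum_congr rfl fun i _ => ?_
    rw [Finset.sum_mul]
    refine Finset.sum_congr rfl fun j _ => ?_
    ring
  rw [this]
  exact mul_nonneg hpow (by positivity)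
end

section
/- Logarithm of an infinitely divisible kernel is conditionally positive definite: let K : X × X → ℝ be a symmetric kernel with K(x,y) > 0 for all x, y ∈ X, and suppose that for every α > 0 the kernel (x,y) ↦ K(x,y)^α is positive definite. Then the kernel (x,y) ↦ log(K(x,y)) is conditionally positive definite. -/
open Finset

/-- The logarithm of a positive, infinitely divisible symmetric kernel is c.p.d. -/
theorem log_of_infinitely_divisible_isCPD {X : Type*} (K : X → X → ℝ)
    (hsym : ∀ x y, K x y = K y x)
    (hpos : ∀ x y, 0 < K x y)
    (hdiv : ∀ α : ℝ, 0 < α → IsPD (fun x y => K x y ^ α)) :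
    IsCPD (fun x y => Real.log (K x y)) := by
  intro n x c hc
  set S : ℝ → ℝ := fun α => ∑ i, ∑ j, c i * c j * K (x i) (x j) ^ α with hS
  have hS0 : S 0 = 0 := by
    simp only [hS, Real.rpow_zero, mul_one, ← Finset.sum_mul, ← Finset.mul_sum]
    simp [hc]
  have hderiv : HasDerivAt S (∑ i, ∑ j, c i * c j * Real.log (K (x i) (x j))) 0 := by
    apply HasDerivAt.fun_sum
    intro i _
    apply HasDerivAt.fun_sum
    intro j _
    have h := (Real.hasStrictDerivAt_const_rpow (hpos (x i) (x j)) 0).hasDerivAt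
    rw [Real.rpow_zero, one_mul] at h
    exact h.const_mul _
  have hslope : Filter.Tendsto (fun α => S α / α) (nhdsWithin 0 (Set.Ioi 0))
      (nhds (∑ i, ∑ j, c i * c j * Real.log (K (x i) (x j)))) := by
    have := (hasDerivAt_iff_tendsto_slope.mp hderiv).mono_left
      (nhdsWithin_mono 0 (by intro a ha; exact ne_of_gt ha : Set.Ioi (0:ℝ) ⊆ {0}ᶜ))
    refine this.congr' ?_
    filter_upwards [self_mem_nhdsWithin] with a ha
    simp [slope, hS0, (Set.mem_Ioi.mp ha).ne', div_eq_inv_mul]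
  refine ge_of_tendsto hslope ?_
  filter_upwards [self_mem_nhdsWithin] with a (ha : 0 < a)
  exact div_nonneg (hdiv a ha n x c) ha.le
end
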